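/- Under the standing hypotheses, for any subgroupoid H of G the map σ : h ↦ J_h is injective on the set S_H = {h ∈ H | J_h ≠ 0}; that is, if g, h ∈ H satisfy J_g = J_h ≠ {0}, then g = h. -/

import Mathlib

open scoped BigOperators

attribute [local instance] Classical.propDecidable

universe u v w

/-- A groupoid in the sense of Lawson: a (nonempty) set `G` with a partially defined
binary operation (here totalized: `mul g h` is only meaningful when `d g = r h`),
inverses, and one-sided identities `r g = g * g⁻¹` and `d g = g⁻¹ * g`. -/
structure Gpd (G : Type*) where
  d : G → G
  r : G → G
  mul : G → G → G
  inv : G → G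
  assoc : ∀ g h l, d g = r h → d h = r l → mul (mul g h) l = mul g (mul h l)
  d_mul : ∀ g h, d g = r h → d (mul g h) = d h
  r_mul : ∀ g h, d g = r h → r (mul g h) = r g
  d_inv : ∀ g, d (inv g) = r g
  r_inv : ∀ g, r (inv g) = d g
  inv_inv : ∀ g, inv (inv g) = g
  mul_inv : ∀ g, mul g (inv g) = r g
  inv_mul : ∀ g, mul (inv g) g = d g
  mul_d : ∀ g, mul g (d g) = g
  r_mul_self : ∀ g, mul (r g) g = g
  d_d : ∀ g, d (d g) = d g
  r_d : ∀ g, r (d g) = d g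
  inv_d : ∀ g, inv (d g) = d g

namespace Gpd

variable {G : Type*} (gpd : Gpd G)

/-- The set `G₀` of identities of the groupoid. -/
def idts : Set G := Set.range gpd.d

/-- `H` is a subgroupoid: a nonempty subset closed under inverses and under all
defined products. -/
def IsSubgpd (H : Set G) : Prop :=
  H.Nonempty ∧ (∀ g ∈ H, gpd.inv g ∈ H) ∧
    ∀ g ∈ H, ∀ h ∈ H, gpd.d g = gpd.r h → gpd.mul g h ∈ H

/-- A wide subgroupoid: a subgroupoid containing all the identities of `G`. -/
def IsWide (H : Set G) : Prop := gpd.IsSubgpd H ∧ gpd.idts ⊆ H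

/-- The subgroupoid generated by a subset `X` of `G`: the intersection of all
subgroupoids containing `X`. -/
def gen (X : Set G) : Set G := ⋂₀ {H : Set G | gpd.IsSubgpd H ∧ X ⊆ H}

end Gpd

/-- A unital action `β` of a groupoid `gpd` on a `K`-algebra `R`.  Each ideal
`E_g = E_{r g}` is the unital ideal `R·(one g)` generated by the central idempotent
`one g` (the identity element `1_g` of `E_g`), and `act g` encodes the `K`-algebra
isomorphism `β_g : E_{g⁻¹} → E_g` (only the values `act g (x * one (inv g))` on
`E_{g⁻¹}` are relevant). -/
structure GpdAct (K : Type*) [CommRing K] (R : Type*) [Ring R] [Algebra K R]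
    {G : Type*} (gpd : Gpd G) where
  one : G → R
  one_central : ∀ g x, one g * x = x * one g
  one_idem : ∀ g, one g * one g = one g
  one_r : ∀ g, one g = one (gpd.r g)
  act : G → R → R
  act_mem : ∀ g x, act g (x * one (gpd.inv g)) * one g = act g (x * one (gpd.inv g))
  act_add : ∀ g x y, act g ((x + y) * one (gpd.inv g)) =
      act g (x * one (gpd.inv g)) + act g (y * one (gpd.inv g))
  act_mul : ∀ g x y, act g (x * y * one (gpd.inv g)) =
      act g (x * one (gpd.inv g)) * act g (y * one (gpd.inv g))
  act_smul : ∀ g (k : K) (x : R),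
      act g (k • x * one (gpd.inv g)) = k • act g (x * one (gpd.inv g))
  act_unit : ∀ g, act g (one (gpd.inv g)) = one g
  act_id : ∀ g x, act (gpd.d g) (x * one (gpd.d g)) = x * one (gpd.d g)
  act_comp : ∀ g h x, gpd.d g = gpd.r h →
      act g (act h (x * one (gpd.inv h)) * one (gpd.inv g)) =
        act (gpd.mul g h) (x * one (gpd.inv h))

section Defs

variable {K : Type*} [CommRing K] {R : Type*} [Ring R] [Algebra K R]
  {G : Type*} (gpd : Gpd G) (β : GpdAct K R gpd)

/-- The invariants `R^{β_H}` of `R` under the restriction of the action to a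
subset `H` of `G`: all `x` with `β_h(x 1_{h⁻¹}) = x 1_h` for all `h ∈ H`. -/
def fixedSet (H : Set G) : Set R :=
  {x : R | ∀ h ∈ H, β.act h (x * β.one (gpd.inv h)) = x * β.one h}

/-- `J_g = {t ∈ E_g | t β_g(x 1_{g⁻¹}) = x t for all x ∈ R}`. -/
def Jset (g : G) : Set R :=
  {t : R | t * β.one g = t ∧ ∀ x : R, t * β.act g (x * β.one (gpd.inv g)) = x * t}

/-- `H_S = {g ∈ G | β_g(s 1_{g⁻¹}) = s 1_g for all s ∈ S}`. -/
def Hset (S : Set R) : Set G :=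
  {g : G | ∀ s ∈ S, β.act g (s * β.one (gpd.inv g)) = s * β.one g}

/-- `R = ⊕_{e ∈ G₀} E_e`, i.e. the identity elements of the ideals `E_e`, `e ∈ G₀`,
are pairwise orthogonal central idempotents summing to `1`. -/
def IsDecomp [Fintype G] : Prop :=
  (∑ e : G, if e ∈ gpd.idts then β.one e else 0) = 1 ∧
    ∀ e f : G, e ∈ gpd.idts → f ∈ gpd.idts → e ≠ f → β.one e * β.one f = 0

/-- `R` is a `β`-Galois extension of `R^β`: there is a Galois coordinate system
`x_i, y_i` with `Σ_i x_i β_g(y_i 1_{g⁻¹}) = δ_{e,g} 1_e` for all `e ∈ G₀`, `g ∈ G`. -/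
def IsGaloisExt [Fintype G] : Prop :=
  ∃ (n : ℕ) (x y : Fin n → R), ∀ g : G,
    (∑ i, x i * β.act g (y i * β.one (gpd.inv g))) = if g ∈ gpd.idts then β.one g else 0

/-- `V = ⊕_{g ∈ H} J_g`: every family `(f g)_{g ∈ H}` with `f g ∈ J_g` sums into `V`,
and every element of `V` is in a unique way such a sum (internal direct sum). -/
def IsDirectSumOver [Fintype G] (H : Set G) (V : Set R) : Prop :=
  (∀ f : G → R, (∀ g, f g ∈ Jset gpd β g) → (∀ g, g ∉ H → f g = 0) → (∑ g, f g) ∈ V) ∧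
    ∀ v ∈ V, ∃! f : G → R,
      (∀ g, f g ∈ Jset gpd β g) ∧ (∀ g, g ∉ H → f g = 0) ∧ v = ∑ g, f g

/-- `γ(H) = ⊕_{h ∈ H} J_h`, as the set of all sums `Σ_{h ∈ H} j_h`, `j_h ∈ J_h`. -/
def gammaSet [Fintype G] (H : Set G) : Set R :=
  {v : R | ∃ f : G → R,
    (∀ g, f g ∈ Jset gpd β g) ∧ (∀ g, g ∉ H → f g = 0) ∧ v = ∑ g, f g}

/-- The product `J_h J_g`: all finite sums of products `a b` with `a ∈ J_h`, `b ∈ J_g`. -/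
def JprodSet (h g : G) : Set R :=
  {z : R | ∃ (n : ℕ) (a b : Fin n → R),
    (∀ i, a i ∈ Jset gpd β h) ∧ (∀ i, b i ∈ Jset gpd β g) ∧ z = ∑ i, a i * b i}

end Defs

section Sep

variable {R : Type u} [Ring R]

/-- A biadditive pairing `φ : R × R → N` is `S`-balanced if `φ(u s, v) = φ(u, s v)`
for all `s ∈ S`.  Such pairings are exactly the additive maps out of `R ⊗_S R`,
so they detect equality in `R ⊗_S R`. -/
def IsBalanced (S : Set R) {N : Type v} [AddCommGroup N] (φ : R →+ R →+ N) : Prop :=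
  ∀ u v s : R, s ∈ S → φ (u * s) v = φ u (s * v)

/-- `R` is a separable extension of the subring `S ⊆ R`: there is
`z = Σ_i x_i ⊗ y_i ∈ R ⊗_S R` with `Σ_i x_i y_i = 1` and `a z = z a` for all `a ∈ R`
(the latter expressed via all `S`-balanced pairings, which detect equality in
`R ⊗_S R`). -/
def RSepOver (S : Set R) : Prop :=
  ∃ (n : ℕ) (x y : Fin n → R), (∑ i, x i * y i) = 1 ∧
    ∀ (N : Type v) [AddCommGroup N] (φ : R →+ R →+ N), IsBalanced S φ →
      ∀ a : R, (∑ i, φ (a * x i) (y i)) = ∑ i, φ (x i) (y i * a)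

/-- `R` is a Hirata separable extension of `S`: `R ⊗_S R` is isomorphic as an
`R`-bimodule to a direct summand of a finite direct sum of copies of `R`.
Equivalently (Casimir elements): there are `R`-central elements
`e_k = Σ_i x_{k,i} ⊗ y_{k,i} ∈ (R ⊗_S R)^R` and `a_k ∈ V_R(S)` with
`Σ_k a_k e_k = 1 ⊗ 1` (centrality and the last equation expressed via all
`S`-balanced pairings, which detect equality in `R ⊗_S R`). -/
def HirataSep (S : Set R) : Prop :=
  ∃ (n m : ℕ) (x y : Fin n → Fin m → R) (a : Fin n → R),
    (∀ k, a k ∈ Set.centralizer S) ∧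
    ∀ (N : Type v) [AddCommGroup N] (φ : R →+ R →+ N), IsBalanced S φ →
      (∀ (k : Fin n) (r : R),
        (∑ i, φ (r * x k i) (y k i)) = ∑ i, φ (x k i) (y k i * r)) ∧
      (∑ k, ∑ i, φ (a k * x k i) (y k i)) = φ 1 1

/-- The subring `A` of `R` is a separable extension of the subring `S ⊆ A`:
there is `z = Σ_i x_i ⊗ y_i ∈ A ⊗_S A` with `Σ_i x_i y_i = 1` and `a z = z a`
for all `a ∈ A`. -/
def SubSepOver (A : Subring R) (S : Set R) : Prop :=
  ∃ (n : ℕ) (x y : Fin n → A), (∑ i, (x i : R) * (y i : R)) = 1 ∧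
    ∀ (N : Type v) [AddCommGroup N] (φ : A →+ A →+ N),
      (∀ u v s : A, (s : R) ∈ S → φ (u * s) v = φ u (s * v)) →
      ∀ a : A, (∑ i, φ (a * x i) (y i)) = ∑ i, φ (x i) (y i * a)

end Sep

/-- `R` satisfies the fundamental theorem: the Galois map `θ : H ↦ R^{β_H}` is a
bijection from the set of wide subgroupoids of `G` onto the set of subalgebras of
`R` which are separable over `R^β`. -/
def SatisfiesFT {K : Type*} [CommRing K] {R : Type u} [Ring R] [Algebra K R]
    {G : Type*} [Fintype G] (gpd : Gpd G) (β : GpdAct K R gpd) : Prop :=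
  (∀ H : Set G, gpd.IsWide H → ∃ A : Subring R, (A : Set R) = fixedSet gpd β H ∧
      fixedSet gpd β Set.univ ⊆ (A : Set R) ∧
      SubSepOver.{u, v} A (fixedSet gpd β Set.univ)) ∧
  (∀ H L : Set G, gpd.IsWide H → gpd.IsWide L →
      fixedSet gpd β H = fixedSet gpd β L → H = L) ∧
  (∀ A : Subring R, fixedSet gpd β Set.univ ⊆ (A : Set R) →
      SubSepOver.{u, v} A (fixedSet gpd β Set.univ) →
      ∃ H : Set G, gpd.IsWide H ∧ fixedSet gpd β H = (A : Set R))

/-!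
Take `t ≠ 0` in `J_g = J_h`. Since `t ∈ E_g ∩ E_h`, orthogonality of the idempotents `1_e`
forces `r g = r h`, so `k = g⁻¹h` is defined. Applying `β_g` to the Galois identity at `k`
and multiplying by `t` gives `t β_g(Σ x_i β_k(y_i)) = Σ x_i t β_h(y_i) = Σ x_i y_i t = t`.
If `k` were not an identity the left side would vanish; hence `k` is an identity and `g = h`.
-/

namespace Gpd

variable {G : Type*} (gpd : Gpd G) {g h : G}

theorem mem_idts_iff {e : G} : e ∈ gpd.idts ↔ gpd.d e = e :=
  ⟨by rintro ⟨m, rfl⟩; exact gpd.d_d m, fun he => ⟨e, he⟩⟩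

theorem r_mem_idts (g : G) : gpd.r g ∈ gpd.idts := ⟨gpd.inv g, gpd.d_inv g⟩

theorem d_inv_eq_r_of_r_eq (hr : gpd.r g = gpd.r h) : gpd.d (gpd.inv g) = gpd.r h := by
  rw [gpd.d_inv, hr]

theorem r_inv_mul (hr : gpd.r g = gpd.r h) : gpd.r (gpd.mul (gpd.inv g) h) = gpd.d g := by
  rw [gpd.r_mul _ _ (gpd.d_inv_eq_r_of_r_eq hr), gpd.r_inv]

theorem d_inv_mul (hr : gpd.r g = gpd.r h) : gpd.d (gpd.mul (gpd.inv g) h) = gpd.d h :=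
  gpd.d_mul _ _ (gpd.d_inv_eq_r_of_r_eq hr)

theorem mul_inv_mul_cancel (hr : gpd.r g = gpd.r h) :
    gpd.mul g (gpd.mul (gpd.inv g) h) = h := by
  rw [← gpd.assoc _ _ _ (gpd.r_inv g).symm (gpd.d_inv_eq_r_of_r_eq hr), gpd.mul_inv, hr,
    gpd.r_mul_self]

theorem eq_of_inv_mul_mem_idts (hr : gpd.r g = gpd.r h)
    (hk : gpd.mul (gpd.inv g) h ∈ gpd.idts) : g = h := by
  have hdg : gpd.d g = gpd.mul (gpd.inv g) h := by
    rw [← gpd.r_inv_mul hr, ← (gpd.mem_idts_iff).1 hk, gpd.r_d]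
  calc g = gpd.mul g (gpd.d g) := (gpd.mul_d g).symm
    _ = h := by rw [hdg, gpd.mul_inv_mul_cancel hr]

end Gpd

namespace GpdAct

variable {K : Type*} [CommRing K] {R : Type*} [Ring R] [Algebra K R]
  {G : Type*} {gpd : Gpd G} (β : GpdAct K R gpd)

theorem one_inv (g : G) : β.one (gpd.inv g) = β.one (gpd.d g) := by
  rw [β.one_r, gpd.r_inv]

theorem act_zero (g : G) : β.act g 0 = 0 := by
  have h := β.act_add g 0 0
  simp only [add_zero, zero_mul, left_eq_add] at h
  exact h

theorem act_sum (g : G) {ι : Type*} (s : Finset ι) (f : ι → R) :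
    β.act g ((∑ i ∈ s, f i) * β.one (gpd.inv g)) =
      ∑ i ∈ s, β.act g (f i * β.one (gpd.inv g)) := by
  induction s using Finset.induction_on with
  | empty => simpa using β.act_zero g
  | insert _ _ hi ih => rw [Finset.sum_insert hi, Finset.sum_insert hi, β.act_add, ih]

theorem act_mul_act_inv_mul {g h : G} (hr : gpd.r g = gpd.r h) (x y : R) :
    β.act g (x * β.act (gpd.mul (gpd.inv g) h)
        (y * β.one (gpd.inv (gpd.mul (gpd.inv g) h))) * β.one (gpd.inv g)) =
      β.act g (x * β.one (gpd.inv g)) * β.act h (y * β.one (gpd.inv h)) := by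
  have hone : β.one (gpd.inv (gpd.mul (gpd.inv g) h)) = β.one (gpd.inv h) := by
    rw [β.one_inv, gpd.d_inv_mul hr, ← β.one_inv]
  rw [β.act_mul, β.act_comp _ _ _ (gpd.r_inv_mul hr).symm, gpd.mul_inv_mul_cancel hr, hone]

theorem sum_mul_mul_one_of_galois {n : ℕ} {x y : Fin n → R}
    (hxy : ∀ g : G, (∑ i, x i * β.act g (y i * β.one (gpd.inv g))) =
      if g ∈ gpd.idts then β.one g else 0)
    {e : G} (he : e ∈ gpd.idts) : (∑ i, x i * y i) * β.one e = β.one e := by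
  obtain ⟨m, rfl⟩ := he
  have h := hxy (gpd.d m)
  rw [if_pos ⟨m, rfl⟩] at h
  simp only [gpd.inv_d, β.act_id] at h
  simpa only [Finset.sum_mul, mul_assoc] using h

end GpdAct

section Jset

variable {K : Type*} [CommRing K] {R : Type*} [Ring R] [Algebra K R]
  {G : Type*} {gpd : Gpd G} {β : GpdAct K R gpd} {g h : G} {t : R}

theorem zero_mem_Jset (g : G) : (0 : R) ∈ Jset gpd β g :=
  ⟨zero_mul _, fun x => by rw [zero_mul, mul_zero]⟩

theorem one_mul_of_mem_Jset (ht : t ∈ Jset gpd β g) : β.one g * t = t := by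
  rw [β.one_central, ht.1]

theorem r_eq_of_mem_Jset
    (horth : ∀ e f : G, e ∈ gpd.idts → f ∈ gpd.idts → e ≠ f → β.one e * β.one f = 0)
    (htg : t ∈ Jset gpd β g) (hth : t ∈ Jset gpd β h) (ht0 : t ≠ 0) : gpd.r g = gpd.r h := by
  by_contra hne
  apply ht0
  calc t = t * (β.one (gpd.r g) * β.one (gpd.r h)) := by
        rw [← mul_assoc, ← β.one_r, htg.1, ← β.one_r, hth.1]
    _ = 0 := by rw [horth _ _ (gpd.r_mem_idts g) (gpd.r_mem_idts h) hne, mul_zero]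

theorem mul_act_sum_of_mem_Jset (htg : t ∈ Jset gpd β g) (hth : t ∈ Jset gpd β h)
    (hr : gpd.r g = gpd.r h) {n : ℕ} (x y : Fin n → R) :
    t * β.act g ((∑ i, x i * β.act (gpd.mul (gpd.inv g) h)
        (y i * β.one (gpd.inv (gpd.mul (gpd.inv g) h)))) * β.one (gpd.inv g)) =
      (∑ i, x i * y i) * t := by
  rw [β.act_sum, Finset.mul_sum, Finset.sum_mul]
  refine Finset.sum_congr rfl fun i _ => ?_
  rw [β.act_mul_act_inv_mul hr, ← mul_assoc, htg.2, mul_assoc, hth.2, mul_assoc]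

end Jset

theorem sigma_injective_on_SH_general {K : Type*} [CommRing K] {R : Type*} [Ring R]
    [Algebra K R] {G : Type*} [Fintype G]
    (gpd : Gpd G) (β : GpdAct K R gpd)
    (hdec : IsDecomp gpd β) (hgal : IsGaloisExt gpd β)
    (H : Set G) :
    ∀ g ∈ H, ∀ h ∈ H, Jset gpd β g = Jset gpd β h → Jset gpd β g ≠ {0} → g = h := by
  intro g _ h _ hJ hne
  obtain ⟨t, htg, ht0⟩ :=
    ((Set.nontrivial_iff_ne_singleton (zero_mem_Jset g)).2 hne).exists_ne 0
  have hth : t ∈ Jset gpd β h := hJ ▸ htg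
  have hr := r_eq_of_mem_Jset hdec.2 htg hth ht0
  obtain ⟨n, x, y, hxy⟩ := hgal
  by_contra hgh
  have hk : gpd.mul (gpd.inv g) h ∉ gpd.idts := fun hk => hgh (gpd.eq_of_inv_mul_mem_idts hr hk)
  apply ht0
  calc t = (∑ i, x i * y i) * β.one g * t := by
        rw [β.one_r, β.sum_mul_mul_one_of_galois hxy (gpd.r_mem_idts g), ← β.one_r,
          one_mul_of_mem_Jset htg]
    _ = t * β.act g ((∑ i, x i * β.act (gpd.mul (gpd.inv g) h)
          (y i * β.one (gpd.inv (gpd.mul (gpd.inv g) h)))) * β.one (gpd.inv g)) := by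
        rw [mul_assoc, one_mul_of_mem_Jset htg, mul_act_sum_of_mem_Jset htg hth hr]
    _ = 0 := by rw [hxy, if_neg hk, zero_mul, β.act_zero, mul_zero]

/-- Lemma 3.6: for any subgroupoid `H` of `G`, the map `σ : h ↦ J_h`
is injective on `S_H = {h ∈ H | J_h ≠ 0}`. -/
theorem sigma_injective_on_SH {K : Type*} [CommRing K] {R : Type*} [Ring R]
    [Algebra K R] {G : Type*} [Fintype G] [Nonempty G]
    (gpd : Gpd G) (β : GpdAct K R gpd)
    (hdec : IsDecomp gpd β) (hgal : IsGaloisExt gpd β)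
    (H : Set G) (hH : gpd.IsSubgpd H) :
    ∀ g ∈ H, ∀ h ∈ H, Jset gpd β g = Jset gpd β h → Jset gpd β g ≠ {0} → g = h :=
  sigma_injective_on_SH_general gpd β hdec hgal H
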